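/- arXiv:2504.09384 — 2 statements merged into one kernel-verified Lean document; each statement's English description precedes it below -/
import Mathlib

section
/- Let X be a topological space and u, φ : X → ℝ. Suppose u has contour similarity with φ: for every β ∈ ℝ and every connected component C of the level set u⁻¹({β}), there exists α ∈ ℝ such that C is a connected component of φ⁻¹({α}). Then u is constant on every connected component of every level set of φ: for every α ∈ ℝ and every connected component D of φ⁻¹({α}), and all i, j ∈ D, u(i) = u(j). -/
/-- If `u` has contour similarity with `φ` (every connected component of every level set
of `u` is a connected component of some level set of `φ`), then `u` is constant on every
connected component of every level set of `φ`. -/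
theorem constant_on_contour_branches_of_contour_similarity
    {X : Type*} [TopologicalSpace X] (u φ : X → ℝ)
    (hsim : ∀ (β : ℝ) (C : Set X),
      (∃ x ∈ u ⁻¹' {β}, C = connectedComponentIn (u ⁻¹' {β}) x) →
      ∃ α : ℝ, ∃ y ∈ φ ⁻¹' {α}, C = connectedComponentIn (φ ⁻¹' {α}) y) :
    ∀ (α : ℝ) (D : Set X),
      (∃ y ∈ φ ⁻¹' {α}, D = connectedComponentIn (φ ⁻¹' {α}) y) →
      ∀ i ∈ D, ∀ j ∈ D, u i = u j := by
  rintro α D ⟨y, hy, rfl⟩ i hi j hj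
  set C := connectedComponentIn (u ⁻¹' {u i}) i with hC
  have hiC : i ∈ C := mem_connectedComponentIn rfl
  obtain ⟨α', z, hz, hCz⟩ := hsim (u i) C ⟨i, rfl, rfl⟩
  have hiα' : φ i = α' := connectedComponentIn_subset (φ ⁻¹' {α'}) z (hCz ▸ hiC)
  have hiα : φ i = α := connectedComponentIn_subset (φ ⁻¹' {α}) y hi
  have hαα' : α' = α := hiα' ▸ hiα
  subst hαα'
  have h1 : C = connectedComponentIn (φ ⁻¹' {α'}) i := by
    rw [hCz]; exact (connectedComponentIn_eq (hCz ▸ hiC))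
  have h2 : connectedComponentIn (φ ⁻¹' {α'}) y = connectedComponentIn (φ ⁻¹' {α'}) i :=
    connectedComponentIn_eq hi
  have hjC : j ∈ C := by rw [h1, ← h2]; exact hj
  have := connectedComponentIn_subset (u ⁻¹' {u i}) i hjC
  exact this.symm
end

section
/- Let Ω ⊆ ℝ² be open, let u, φ : ℝ² → ℝ be differentiable on Ω with ∇φ(i) ≠ 0 for all i ∈ Ω, and define the contour flow field F(i) = J(∇φ(i)) / ‖∇φ(i)‖, where J(v₁,v₂) = (-v₂,v₁) is rotation by π/2. Assume the contour flow constraint ⟨∇u(i), F(i)⟩ = 0 holds for every i ∈ Ω. Let ψ : ℝ → Ω be a differentiable curve that is tangent to the level sets of u and along which ∇u does not vanish: for all t, ⟨∇u(ψ(t)), ψ′(t)⟩ = 0 and ∇u(ψ(t)) ≠ 0. Then (φ ∘ ψ)′(t) = 0 for all t; in particular φ is constant along ψ. -/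
/-!
Since `F` is a nonzero multiple of `J ∇φ`, the constraint says `∇u ⟂ J ∇φ`; in the plane this
makes `∇u` and `∇φ` parallel. Where `∇u ≠ 0`, a tangent vector of a level curve of `u` is
orthogonal to `∇u`, hence to `∇φ`, and the chain rule gives `(φ ∘ ψ)' = ⟪∇φ, ψ'⟫ = 0`.
-/

open scoped RealInnerProductSpace

/-- Rotation of the plane by `π/2`: `J(v₁, v₂) = (-v₂, v₁)`. -/
noncomputable def Jrot (v : EuclideanSpace ℝ (Fin 2)) : EuclideanSpace ℝ (Fin 2) :=
  WithLp.toLp 2 ![-(v 1), v 0]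

theorem inner_smul_eq_inner_smul_add_inner_Jrot_smul (a b v : EuclideanSpace ℝ (Fin 2)) :
    ⟪b, v⟫ • a = ⟪a, v⟫ • b + ⟪a, Jrot b⟫ • Jrot v := by
  ext i
  fin_cases i <;>
    simp only [PiLp.inner_apply, RCLike.inner_apply, Real.ringHom_apply, Fin.sum_univ_two,
      Fin.isValue, Fin.zero_eta, Fin.mk_one, PiLp.smul_apply, smul_eq_mul, Jrot,
      Matrix.cons_val_zero, Matrix.cons_val_one, Matrix.cons_val_fin_one, PiLp.add_apply] <;>
    ring

theorem inner_eq_zero_of_inner_Jrot_eq_zero {a b v : EuclideanSpace ℝ (Fin 2)} (ha : a ≠ 0)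
    (hJ : ⟪a, Jrot b⟫ = 0) (hv : ⟪a, v⟫ = 0) : ⟪b, v⟫ = 0 := by
  have h := inner_smul_eq_inner_smul_add_inner_Jrot_smul a b v
  rw [hJ, hv, zero_smul, zero_smul, add_zero, smul_eq_zero] at h
  exact h.resolve_right ha

theorem HasGradientAt.comp_hasDerivAt {E : Type*} [NormedAddCommGroup E]
    [InnerProductSpace ℝ E] [CompleteSpace E] {f : E → ℝ} {f' : E} {γ : ℝ → E} {γ' : E} {t : ℝ}
    (hf : HasGradientAt f f' (γ t)) (hγ : HasDerivAt γ γ' t) :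
    HasDerivAt (f ∘ γ) ⟪f', γ'⟫ t :=
  hf.hasFDerivAt.comp_hasDerivAt t hγ

theorem contour_flow_constraint_implies_phi_constant_along_level_curves_general
    (Ω : Set (EuclideanSpace ℝ (Fin 2)))
    (u φ : EuclideanSpace ℝ (Fin 2) → ℝ)
    (hφ : ∀ i ∈ Ω, DifferentiableAt ℝ φ i)
    (hgrad : ∀ i ∈ Ω, gradient φ i ≠ 0)
    (F : EuclideanSpace ℝ (Fin 2) → EuclideanSpace ℝ (Fin 2))
    (hF : ∀ i ∈ Ω, F i = ‖gradient φ i‖⁻¹ • Jrot (gradient φ i))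
    -- the contour flow constraint holds on `Ω`
    (hCF : ∀ i ∈ Ω, ⟪gradient u i, F i⟫ = 0)
    -- `ψ` is a differentiable curve in `Ω`, tangent to the level sets of `u`,
    -- along which `∇u` does not vanish
    (ψ : ℝ → EuclideanSpace ℝ (Fin 2))
    (hψΩ : ∀ t : ℝ, ψ t ∈ Ω)
    (hψd : ∀ t : ℝ, DifferentiableAt ℝ ψ t)
    (htan : ∀ t : ℝ, ⟪gradient u (ψ t), deriv ψ t⟫ = 0)
    (hne : ∀ t : ℝ, gradient u (ψ t) ≠ 0) :
    (∀ t : ℝ, deriv (φ ∘ ψ) t = 0) ∧ ∀ s t : ℝ, φ (ψ s) = φ (ψ t) := by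
  have hJ : ∀ i ∈ Ω, ⟪gradient u i, Jrot (gradient φ i)⟫ = 0 := fun i hi => by
    have h := hCF i hi
    rw [hF i hi, real_inner_smul_right, mul_eq_zero] at h
    exact h.resolve_left (by simpa using hgrad i hi)
  have hderiv : ∀ t, HasDerivAt (φ ∘ ψ) 0 t := fun t => by
    have h := (hφ _ (hψΩ t)).hasGradientAt.comp_hasDerivAt (hψd t).hasDerivAt
    rwa [inner_eq_zero_of_inner_Jrot_eq_zero (hne t) (hJ _ (hψΩ t)) (htan t)] at h
  have hderiv_eq : ∀ t, deriv (φ ∘ ψ) t = 0 := fun t => (hderiv t).deriv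
  exact ⟨hderiv_eq, fun s t =>
    is_const_of_deriv_eq_zero (fun t => (hderiv t).differentiableAt) hderiv_eq s t⟩

theorem contour_flow_constraint_implies_phi_constant_along_level_curves
    (Ω : Set (EuclideanSpace ℝ (Fin 2))) (hΩ : IsOpen Ω)
    (u φ : EuclideanSpace ℝ (Fin 2) → ℝ)
    (hu : ∀ i ∈ Ω, DifferentiableAt ℝ u i)
    (hφ : ∀ i ∈ Ω, DifferentiableAt ℝ φ i)
    (hgrad : ∀ i ∈ Ω, gradient φ i ≠ 0)
    (F : EuclideanSpace ℝ (Fin 2) → EuclideanSpace ℝ (Fin 2))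
    (hF : ∀ i ∈ Ω, F i = ‖gradient φ i‖⁻¹ • Jrot (gradient φ i))
    -- the contour flow constraint holds on `Ω`
    (hCF : ∀ i ∈ Ω, ⟪gradient u i, F i⟫ = 0)
    -- `ψ` is a differentiable curve in `Ω`, tangent to the level sets of `u`,
    -- along which `∇u` does not vanish
    (ψ : ℝ → EuclideanSpace ℝ (Fin 2))
    (hψΩ : ∀ t : ℝ, ψ t ∈ Ω)
    (hψd : ∀ t : ℝ, DifferentiableAt ℝ ψ t)
    (htan : ∀ t : ℝ, ⟪gradient u (ψ t), deriv ψ t⟫ = 0)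
    (hne : ∀ t : ℝ, gradient u (ψ t) ≠ 0) :
    (∀ t : ℝ, deriv (φ ∘ ψ) t = 0) ∧ ∀ s t : ℝ, φ (ψ s) = φ (ψ t) :=
  contour_flow_constraint_implies_phi_constant_along_level_curves_general Ω u φ hφ hgrad F hF hCF ψ
    hψΩ hψd htan hne
end
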